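/- If a graph G has a vertex v such that G − N[v] admits an (I,O_3)-partition, v has degree at most 3, and every neighbour of v has degree exactly 2 in G, then G admits an (I,O_3)-partition. -/

import Mathlib

/-- `G` admits an `(I, O_k)`-partition: the vertex set can be partitioned into an
independent set `I` and a set `O = Iᶜ` such that every connected component of the
subgraph induced by `O` has at most `k` vertices. -/
def HasIOPartition {V : Type} (G : SimpleGraph V) (k : ℕ) : Prop :=
  ∃ I : Set V, (∀ u ∈ I, ∀ v ∈ I, ¬ G.Adj u v) ∧
    ∀ c : (G.induce Iᶜ).ConnectedComponent, c.supp.ncard ≤ k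
open SimpleGraph

lemma io_helper {V : Type} [Finite V] (G : SimpleGraph V) (K : Set V)
    (I₀ : Set ↥(Kᶜ))
    (hComp₀ : ∀ c : ((G.induce (Kᶜ : Set V)).induce I₀ᶜ).ConnectedComponent,
      c.supp.ncard ≤ 3)
    (I' P : Set V)
    (hIndep : ∀ a ∈ I', ∀ b ∈ I', ¬ G.Adj a b)
    (hP : P.ncard ≤ 3)
    (hCover1 : ∀ x, x ∈ I'ᶜ → x ∉ P → x ∈ Kᶜ)
    (hCover2 : ∀ x (h : x ∈ Kᶜ), x ∈ I'ᶜ → x ∉ P → (⟨x, h⟩ : ↥(Kᶜ)) ∉ I₀)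
    (hSep : ∀ a b : V, a ∈ I'ᶜ → b ∈ I'ᶜ → a ∈ P → b ∉ P → ¬ G.Adj a b) :
    ∃ I : Set V, (∀ u ∈ I, ∀ v ∈ I, ¬ G.Adj u v) ∧
      ∀ c : (G.induce Iᶜ).ConnectedComponent, c.supp.ncard ≤ 3 := by
  classical
  refine ⟨I', hIndep, ?_⟩
  have hadj : ∀ y z : ↥(I'ᶜ), (G.induce (I'ᶜ : Set V)).Adj y z → G.Adj y.val z.val := by
    intro y z h
    exact h
  -- walking preserves membership in P
  have walkP : ∀ (y z : ↥(I'ᶜ)), (G.induce (I'ᶜ : Set V)).Walk y z →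
      y.val ∈ P → z.val ∈ P := by
    intro y z w
    induction w with
    | nil => exact id
    | cons h p ih =>
      rename_i a b c
      intro ha
      apply ih
      by_contra hb
      exact hSep _ _ a.prop b.prop ha hb (hadj _ _ h)
  -- the embedding into the old graph
  set H := ((G.induce (Kᶜ : Set V)).induce I₀ᶜ) with hH
  let Fdef : ∀ (y : ↥(I'ᶜ)), y.val ∉ P → ↥(I₀ᶜ) := fun y hy =>
    ⟨⟨y.val, hCover1 _ y.prop hy⟩, hCover2 _ _ y.prop hy⟩
  have walkO : ∀ (y z : ↥(I'ᶜ)), (G.induce (I'ᶜ : Set V)).Walk y z →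
      ∀ (hy : y.val ∉ P) (hz : z.val ∉ P), H.Reachable (Fdef y hy) (Fdef z hz) := by
    intro y z w
    induction w with
    | nil =>
      intro hy hz
      exact Reachable.refl _
    | cons h p ih =>
      rename_i a b c
      intro ha hc
      have hb : b.val ∉ P := by
        by_contra hb
        exact hSep _ _ b.prop a.prop hb ha ((hadj _ _ h).symm)
      have step : H.Adj (Fdef a ha) (Fdef b hb) := hadj _ _ h
      exact (step.reachable).trans (ih hb hc)
  intro c
  obtain ⟨x, rfl⟩ := c.exists_rep
  by_cases hx : x.val ∈ P
  · -- component lies inside P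
    have hsub : Subtype.val '' ((G.induce (I'ᶜ : Set V)).connectedComponentMk x).supp ⊆ P := by
      rintro _ ⟨y, hy, rfl⟩
      rw [ConnectedComponent.mem_supp_iff, ConnectedComponent.eq] at hy
      obtain ⟨w⟩ := hy.symm
      exact walkP _ _ w hx
    calc ((G.induce (I'ᶜ : Set V)).connectedComponentMk x).supp.ncard
        = (Subtype.val '' ((G.induce (I'ᶜ : Set V)).connectedComponentMk x).supp).ncard :=
          (Set.ncard_image_of_injective _ Subtype.val_injective).symm
      _ ≤ P.ncard := Set.ncard_le_ncard hsub P.toFinite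
      _ ≤ 3 := hP
  · -- component maps injectively into an old component
    have hall : ∀ y, y ∈ ((G.induce (I'ᶜ : Set V)).connectedComponentMk x).supp → y.val ∉ P := by
      intro y hy hyP
      rw [ConnectedComponent.mem_supp_iff, ConnectedComponent.eq] at hy
      obtain ⟨w⟩ := hy
      exact hx (walkP _ _ w hyP)
    have key : ((G.induce (I'ᶜ : Set V)).connectedComponentMk x).supp.ncard ≤
        (H.connectedComponentMk (Fdef x hx)).supp.ncard := by
      refine Set.ncard_le_ncard_of_injOn
        (fun y => if hy : y.val ∉ P then Fdef y hy else Fdef x hx) ?_ ?_ (Set.toFinite _)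
      · intro y hy
        have hyP := hall y hy
        simp only [dif_pos hyP]
        rw [ConnectedComponent.mem_supp_iff, ConnectedComponent.eq] at hy ⊢
        obtain ⟨w⟩ := hy
        exact walkO _ _ w hyP hx
      · intro y hy z hz hyz
        have hyP := hall y hy
        have hzP := hall z hz
        simp only [dif_pos hyP, dif_pos hzP] at hyz
        have : y.val = z.val := congrArg (fun t => t.val.val) hyz
        exact Subtype.ext this
    exact key.trans (hComp₀ _)

theorem closed_nbhd_extension {V : Type} [Fintype V] [DecidableEq V]
    (G : SimpleGraph V) [DecidableRel G.Adj] (v : V)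
    (h1 : HasIOPartition (G.induce ((insert v (G.neighborSet v))ᶜ : Set V)) 3)
    (h2 : G.degree v ≤ 3)
    (h3 : ∀ u, G.Adj v u → G.degree u = 2) :
    HasIOPartition G 3 := by
  classical
  set K : Set V := insert v (G.neighborSet v) with hK
  obtain ⟨I₀, hIndep₀, hComp₀⟩ := h1
  -- the old independent set, as a set of V
  set I : Set V := {x | ∃ h : x ∈ Kᶜ, (⟨x, h⟩ : ↥(Kᶜ)) ∈ I₀} with hI
  have hIK : I ⊆ Kᶜ := fun x hx => hx.1
  have hIndepI : ∀ a ∈ I, ∀ b ∈ I, ¬ G.Adj a b := by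
    rintro a ⟨ha, ha0⟩ b ⟨hb, hb0⟩ hab
    exact hIndep₀ _ ha0 _ hb0 hab
  have hvK : v ∈ K := Set.mem_insert _ _
  have hNK : ∀ u, G.Adj v u → u ∈ K := fun u hu => Set.mem_insert_of_mem _ hu
  -- the second neighbour of each neighbour of v
  have hW : ∀ u, G.Adj v u → ∃ w, G.Adj u w ∧ w ≠ v ∧ ∀ y, G.Adj u y → y = v ∨ y = w := by
    intro u hu
    have hdeg : (G.neighborFinset u).card = 2 := h3 u hu
    have hv : v ∈ G.neighborFinset u := by
      rw [mem_neighborFinset]; exact hu.symm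
    have h1' : ((G.neighborFinset u).erase v).card = 1 := by
      rw [Finset.card_erase_of_mem hv, hdeg]
    obtain ⟨w, hw⟩ := Finset.card_eq_one.mp h1'
    have hwmem : w ∈ (G.neighborFinset u).erase v := by rw [hw]; exact Finset.mem_singleton_self _
    refine ⟨w, ?_, (Finset.mem_erase.mp hwmem).1, ?_⟩
    · exact (mem_neighborFinset _ _ _).mp (Finset.mem_erase.mp hwmem).2
    · intro y hy
      by_cases hyv : y = v
      · exact Or.inl hyv
      · right
        have : y ∈ (G.neighborFinset u).erase v :=
          Finset.mem_erase.mpr ⟨hyv, (mem_neighborFinset _ _ _).mpr hy⟩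
        rw [hw] at this
        exact Finset.mem_singleton.mp this
  choose W hW1 hW2 hW3 using hW
  -- facts about W
  have hWne : ∀ u (h : G.Adj v u), W u h ≠ u := by
    intro u h he
    exact G.irrefl (he ▸ hW1 u h)
  -- S : neighbours whose second neighbour is in the old O
  set S : Set V := {u | ∃ h : G.Adj v u, W u h ∈ Kᶜ ∧ W u h ∉ I} with hS
  by_cases hcase : ∀ u (h : G.Adj v u), W u h ∈ I
  · -- Case a : put v in I
    refine io_helper G K I₀ hComp₀ (I ∪ {v}) (G.neighborSet v) ?_ ?_ ?_ ?_ ?_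
    · rintro a (haI | rfl) b (hbI | rfl)
      · exact hIndepI _ haI _ hbI
      · intro hab
        exact hIK haI (hNK a hab.symm)
      · intro hab
        exact hIK hbI (hNK b hab)
      · exact fun hab => G.irrefl hab
    · have : (G.neighborSet v).ncard = G.degree v := by
        rw [Set.ncard_eq_toFinset_card', ← neighborFinset_def]
        rfl
      rw [this]; exact h2
    · intro x hx hxP
      intro hxK
      rcases hxK with rfl | hxN
      · exact hx (Or.inr rfl)
      · exact hxP hxN
    · intro x h hx hxP hx0
      exact hx (Or.inl ⟨h, hx0⟩)
    · intro a b ha hb haP hbP hab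
      have haN : G.Adj v a := haP
      rcases hW3 a haN b hab with rfl | rfl
      · exact hb (Or.inr rfl)
      · -- b = W a, which is in I
        have := hcase a haN
        exact hb (Or.inl this)
  · -- Case b : put v in O
    push_neg at hcase
    obtain ⟨u0, h0, hu0I⟩ := hcase
    -- the key claim : a member of S ∪ {u0} is not adjacent to anything in I'
    set I' : Set V := I ∪ (S ∪ {u0}) with hI'
    have hSN : ∀ u ∈ S ∪ {u0}, G.Adj v u := by
      rintro u (⟨h, _⟩ | rfl)
      · exact h
      · exact h0
    have claim : ∀ u ∈ S ∪ {u0}, ∀ b ∈ I', ¬ G.Adj u b := by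
      intro u hu b hb hab
      have huN : G.Adj v u := hSN u hu
      rcases hW3 u huN b hab with hbv | hbw
      · -- b = v : but v ∉ I'
        subst hbv
        rcases hb with hbI | hbS
        · exact hIK hbI hvK
        · exact G.irrefl (hSN _ hbS)
      · -- b = W u huN ∈ I'
        rcases hu with huS | hu0
        · -- u ∈ S : W u ∈ Kᶜ \ I
          obtain ⟨h', hwK, hwI⟩ := huS
          have he : W u h' = b := by rw [hbw, Subsingleton.elim h' huN]
          rw [he] at hwK hwI
          rcases hb with hbI | hbS
          · exact hwI hbI
          · exact hwK (hNK _ (hSN _ hbS))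
        · -- u = u0
          have hu0 : u = u0 := hu0
          subst hu0
          have he : W u h0 = b := by rw [hbw, Subsingleton.elim h0 huN]
          rcases hb with hbI | hbS
          · exact hu0I (he ▸ hbI)
          · rcases hbS with hbS | hbu0
            · -- b ∈ S : second neighbour of b is u ∈ K, contradiction
              obtain ⟨h', hwK, _⟩ := hbS
              rcases hW3 b h' u hab.symm with huv | heq
              · exact G.irrefl (huv ▸ h0)
              · exact hwK (heq ▸ hNK u h0)
            · -- b = u0 = u : loop, impossible
              have : b = u := hbu0
              exact G.irrefl (this ▸ hab)
    refine io_helper G K I₀ hComp₀ I' (insert v (G.neighborSet v \ (S ∪ {u0}))) ?_ ?_ ?_ ?_ ?_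
    · rintro a (haI | haS) b hb
      · rcases hb with hbI | hbS
        · exact hIndepI _ haI _ hbI
        · intro hab
          exact claim b hbS a (Or.inl haI) hab.symm
      · exact claim a haS b hb
    · -- cardinality of P
      have hsub : G.neighborSet v \ (S ∪ {u0}) ⊆ G.neighborSet v \ {u0} := by
        intro x hx
        exact ⟨hx.1, fun h => hx.2 (Or.inr h)⟩
      have h5 : (G.neighborSet v).ncard = G.degree v := by
        rw [Set.ncard_eq_toFinset_card', ← neighborFinset_def]
        rfl
      have h6 : (G.neighborSet v \ {u0}).ncard = (G.neighborSet v).ncard - 1 :=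
        Set.ncard_diff_singleton_of_mem h0
      calc (insert v (G.neighborSet v \ (S ∪ {u0}))).ncard
          ≤ (G.neighborSet v \ (S ∪ {u0})).ncard + 1 := Set.ncard_insert_le _ _
        _ ≤ (G.neighborSet v \ {u0}).ncard + 1 := by
            exact Nat.add_le_add_right (Set.ncard_le_ncard hsub (Set.toFinite _)) 1
        _ ≤ 3 := by rw [h6, h5]; omega
    · -- cover1
      intro x hx hxP hxK
      rcases hxK with rfl | hxN
      · exact hxP (Set.mem_insert _ _)
      · -- x ∈ N(v); x ∉ I', so x ∉ S ∪ {u0}; hence x ∈ P, contradiction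
        have hxS : x ∉ S ∪ {u0} := fun h => hx (Or.inr h)
        exact hxP (Set.mem_insert_of_mem _ ⟨hxN, hxS⟩)
    · -- cover2
      intro x h hx hxP hx0
      exact hx (Or.inl ⟨h, hx0⟩)
    · -- separation
      intro a b ha hb haP hbP hab
      have hbK : b ∈ Kᶜ := by
        intro hbK
        rcases hbK with rfl | hbN
        · exact hbP (Set.mem_insert _ _)
        · exact hbP (Set.mem_insert_of_mem _ ⟨hbN, fun h => hb (Or.inr h)⟩)
      rcases haP with rfl | haN
      · exact hbK (hNK b hab)
      · obtain ⟨haN', haS⟩ := haN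
        rcases hW3 a haN' b hab with hbv | hbw
        · exact hbK (hbv ▸ hvK)
        · -- b = W a ∈ Kᶜ; a ∉ S means ¬(W a ∈ Kᶜ ∧ W a ∉ I)
          apply haS
          left
          refine ⟨haN', ?_, ?_⟩
          · rw [← hbw]; exact hbK
          · rw [← hbw]; exact fun h => hb (Or.inl h)
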